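/- For every natural number m ≥ 2 and every natural number n, (m^2 + m - 1) · ∑_{k=0}^n m^k · L_k = m^{n+1} · ((2m+1)·F_{n+1} - (m-2)·F_n) + (m-2) (as integers). -/

import Mathlib

def lucas : ℕ → ℕ
  | 0 => 2
  | 1 => 1
  | n + 2 => lucas (n + 1) + lucas n

theorem lucas_add_fib (n : ℕ) : lucas n + Nat.fib n = 2 * Nat.fib (n + 1) := by
  induction n using Nat.twoStepInduction with
  | zero => rfl
  | one => rfl
  | more k ih₀ ih₁ =>
    simp only [lucas, Nat.fib_add_two] at ih₁ ⊢
    omega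

theorem lucas_cast_eq {R : Type*} [Ring R] (n : ℕ) :
    (lucas n : R) = 2 * Nat.fib (n + 1) - Nat.fib n :=
  eq_sub_of_add_eq (by exact_mod_cast congrArg (Nat.cast : ℕ → R) (lucas_add_fib n))

/-- The right-hand side grows from `n` to `n + 1` by `(x ^ 2 + x - 1) * x ^ (n + 1) * L (n + 1)`,
once `L (n + 1)` is written as `2 F (n + 2) - F (n + 1)`. -/
theorem mul_sum_pow_mul_lucas {R : Type*} [CommRing R] (x : R) (n : ℕ) :
    (x ^ 2 + x - 1) * ∑ k ∈ Finset.range (n + 1), x ^ k * lucas k =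
      x ^ (n + 1) * ((2 * x + 1) * Nat.fib (n + 1) - (x - 2) * Nat.fib n) + (x - 2) := by
  induction n with
  | zero =>
    simp only [Finset.sum_range_succ, Finset.sum_range_zero, lucas, Nat.fib_zero]
    push_cast
    ring
  | succ n ih =>
    rw [Finset.sum_range_succ, mul_add, ih, lucas_cast_eq, Nat.fib_add_two]
    push_cast
    ring

theorem sum_pow_mul_lucas_general (m n : ℕ) :
    ((m : ℤ) ^ 2 + m - 1) * ∑ k ∈ Finset.range (n + 1), (m : ℤ) ^ k * lucas k =
      (m : ℤ) ^ (n + 1) * ((2 * m + 1) * Nat.fib (n + 1) - (m - 2) * Nat.fib n) + (m - 2) :=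
  mul_sum_pow_mul_lucas (m : ℤ) n

theorem sum_pow_mul_lucas (m n : ℕ) (hm : 2 ≤ m) :
    ((m : ℤ) ^ 2 + m - 1) * ∑ k ∈ Finset.range (n + 1), (m : ℤ) ^ k * lucas k =
      (m : ℤ) ^ (n + 1) * ((2 * m + 1) * Nat.fib (n + 1) - (m - 2) * Nat.fib n) + (m - 2) :=
  sum_pow_mul_lucas_general m n
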